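/- Let q be a power of a prime p, let n ≥ 2, let r be an integer with ⌈n/2⌉ ≤ r ≤ n-1 and gcd(n,r) = 1, and let 1 ≤ s ≤ n-1. Let g_s(x) ∈ F_{q^n}[x] be a monic q-polynomial of degree q^s that splits into linear factors over F_{q^n} and such that g_s(g(x)) = T_n(x) for some monic q-polynomial g(x) ∈ F_{q^n}[x]. Then the number of pairs (x,y) ∈ F_{q^n} × F_{q^n} satisfying g_s(y) = x^{q^{n-r}+1} - x^{q^{n}+q^{n-r}} is exactly q^{n+s}. -/

import Mathlib

open Polynomial

/-- A `q`-polynomial (linearized polynomial): every monomial exponent is a power of `q`. -/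
def IsqPoly (q : ℕ) {F : Type*} [Semiring F] (f : Polynomial F) : Prop :=
  ∀ i ∈ f.support, ∃ k : ℕ, i = q ^ k

/-! In `F_{q^n}` every `x` satisfies `x^{q^n} = x`, so the right-hand side
`x^{q^{n-r}+1} - x^{q^n+q^{n-r}}` vanishes identically and the points are `F × {roots of g_s}`.
Since the characteristic divides `q`, the derivative of a `q`-polynomial is its linear
coefficient; the chain rule applied to `g_s ∘ g = T_n`, whose derivative is `1`, makes that
coefficient of `g_s` a unit. Hence `g_s` is separable, and, being split, has `q^s` distinct roots. -/

theorem IsqPoly.derivative_eq_C_coeff_one {R : Type*} [Semiring R] {q : ℕ} (hq : (q : R) = 0)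
    {f : R[X]} (hf : IsqPoly q f) : derivative f = C (f.coeff 1) := by
  ext m
  rw [coeff_derivative, coeff_C]
  rcases eq_or_ne m 0 with rfl | hm
  · simp
  rw [if_neg hm]
  by_cases hmem : m + 1 ∈ f.support
  · obtain ⟨k, hk⟩ := hf _ hmem
    have hk0 : k ≠ 0 := by rintro rfl; rw [pow_zero] at hk; omega
    have hvanish : ((m + 1 : ℕ) : R) = 0 := by rw [hk, Nat.cast_pow, hq, zero_pow hk0]
    rw [← Nat.cast_succ, hvanish, mul_zero]
  · rw [notMem_support_iff.mp hmem, zero_mul]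

theorem derivative_sum_X_pow_pow {R : Type*} [Semiring R] {q n : ℕ} (hq : (q : R) = 0)
    (hn : n ≠ 0) : derivative (∑ i ∈ Finset.range n, (X : R[X]) ^ q ^ i) = 1 := by
  rw [derivative_sum, Finset.sum_eq_single 0]
  · simp
  · intro i _ hi
    simp [derivative_X_pow, hq, hi]
  · simp [Nat.pos_of_ne_zero hn]

theorem IsqPoly.separable_of_comp_eq_sum {R : Type*} [CommSemiring R] {q n : ℕ}
    (hq : (q : R) = 0) (hn : n ≠ 0) {f g : R[X]} (hf : IsqPoly q f) (hg : IsqPoly q g)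
    (hcomp : f.comp g = ∑ i ∈ Finset.range n, X ^ q ^ i) : f.Separable := by
  have hunit : f.coeff 1 * g.coeff 1 = 1 := by
    have := congrArg derivative hcomp
    rw [derivative_comp, derivative_sum_X_pow_pow hq hn, hf.derivative_eq_C_coeff_one hq,
      hg.derivative_eq_C_coeff_one hq, C_comp, ← C_mul, ← C_1] at this
    rw [mul_comm]
    exact C_injective this
  refine ⟨0, C (g.coeff 1), ?_⟩
  rw [hf.derivative_eq_C_coeff_one hq, zero_mul, zero_add, ← C_mul, mul_comm, hunit, C_1]

theorem ncard_setOf_eval_eq_zero {K : Type*} [Field K] {f : K[X]} (hsep : f.Separable)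
    (hsplit : Splits f) : {x | f.eval x = 0}.ncard = f.natDegree := by
  have hroots : {x | f.eval x = 0} = f.rootSet K := by
    ext x
    simp [mem_rootSet, hsep.ne_zero]
  rw [hroots, ← Nat.card_coe_set_eq, Nat.card_eq_fintype_card,
    card_rootSet_eq_natDegree hsep (by simpa using hsplit)]

theorem FiniteField.pow_card_add {K : Type*} [GroupWithZero K] [Fintype K] (x : K) (m : ℕ) :
    x ^ (Fintype.card K + m) = x ^ (m + 1) := by
  rw [pow_add, FiniteField.pow_card, pow_succ']

theorem card_affine_points_subcover_general
    (q n r s : ℕ)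
    (hn : 2 ≤ n)
    (F : Type*) [Field F] [Fintype F] (hF : Fintype.card F = q ^ n)
    (gs g : Polynomial F)
    (hgs_q : IsqPoly q gs)
    (hgs_deg : gs.natDegree = q ^ s)
    (hgs_split : Splits (gs.map (RingHom.id F)))
    (hg_q : IsqPoly q g)
    (hcomp : gs.comp g = ∑ i ∈ Finset.range n, X ^ q ^ i) :
    Set.ncard {xy : F × F |
        Polynomial.eval xy.2 gs = xy.1 ^ (q ^ (n - r) + 1) - xy.1 ^ (q ^ n + q ^ (n - r))} =
      q ^ (n + s) := by
  have hqF : (q : F) = 0 :=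
    eq_zero_of_pow_eq_zero (n := n) (by rw [← Nat.cast_pow, ← hF, FiniteField.cast_card_eq_zero])
  have hsep : gs.Separable := hgs_q.separable_of_comp_eq_sum hqF (by omega) hg_q hcomp
  have hpoints : {xy : F × F |
      Polynomial.eval xy.2 gs = xy.1 ^ (q ^ (n - r) + 1) - xy.1 ^ (q ^ n + q ^ (n - r))} =
      Set.univ ×ˢ {y | gs.eval y = 0} := by
    ext ⟨x, y⟩
    simp [← hF, FiniteField.pow_card_add]
  rw [hpoints, Set.ncard_prod, Set.ncard_univ, Nat.card_eq_fintype_card, hF,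
    ncard_setOf_eval_eq_zero hsep (by simpa using hgs_split), hgs_deg, pow_add]

/-- Part of Theorem 3.1: the number of affine `F_{q^n}`-rational points of the subcover
`X_{n,r}^s : g_s(y) = x^{q^{n-r}+1} - x^{q^n+q^{n-r}}` is exactly `q^{n+s}`. -/
theorem card_affine_points_subcover
    (p q e n r s : ℕ) (hp : p.Prime) (he : 0 < e) (hq : q = p ^ e)
    (hn : 2 ≤ n) (hr1 : n ≤ 2 * r) (hr2 : r ≤ n - 1) (hgcd : Nat.gcd n r = 1)
    (hs1 : 1 ≤ s) (hs2 : s ≤ n - 1)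
    (F : Type*) [Field F] [Fintype F] (hF : Fintype.card F = q ^ n)
    (gs g : Polynomial F)
    (hgs_monic : gs.Monic) (hgs_q : IsqPoly q gs)
    (hgs_deg : gs.natDegree = q ^ s)
    (hgs_split : Splits (gs.map (RingHom.id F)))
    (hg_monic : g.Monic) (hg_q : IsqPoly q g)
    (hcomp : gs.comp g = ∑ i ∈ Finset.range n, X ^ q ^ i) :
    Set.ncard {xy : F × F |
        Polynomial.eval xy.2 gs = xy.1 ^ (q ^ (n - r) + 1) - xy.1 ^ (q ^ n + q ^ (n - r))} =
      q ^ (n + s) :=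
  card_affine_points_subcover_general q n r s hn F hF gs g hgs_q hgs_deg hgs_split hg_q hcomp
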